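/- arXiv:2010.04487 — 3 statements merged into one kernel-verified Lean document; each statement's English description precedes it below -/
import Mathlib

section
/- Let $\Delta \in \mathbb{C}^{m\times m}$ with entries $\Delta_{j,l} = A_{j,l} + i B_{j,l}$ and $M_{j,l} = |\Delta_{j,l}|$, and let $\rho = \mathrm{diag}(\rho_1,\dots,\rho_m)$ with $\rho_i \in \mathbb{R}$. Define $R_i = \sum_{j \ne i} M_{j,i}$ and $G = (I - \rho) - \Delta \rho$. If for every $i$: (a) $R_i < 1 + A_{i,i}$, (b) $0 < \rho_i < 2(1 + A_{i,i} - R_i)/(1 + 2A_{i,i} + M_{i,i}^2 - R_i^2)$, and (c) $\rho_i R_i < 1$, then every eigenvalue of $G$ has modulus strictly less than 1. -/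
/-!
Write `G = 1 - (1 + Δ) ρ`. Column `k` of `G` has diagonal entry `1 - wρₖ` with `w = 1 + Δₖₖ`
and off-diagonal entries `-Δⱼₖρₖ`, so by Geršgorin's theorem applied to `Gᵀ` every eigenvalue
lies within `ρₖRₖ` of `1 - wρₖ` for some `k`. It then suffices that `‖1 - wρₖ‖ < 1 - ρₖRₖ`.
Since `‖1 - wρ‖² = 1 - 2ρ Re w + ρ²‖w‖²` and `‖w‖² = 1 + 2Aₖₖ + Mₖₖ²`, squaring turns this
into `ρₖ (‖w‖² - Rₖ²) < 2 (Re w - Rₖ)`, which is condition (b) with its denominator cleared.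
-/

open Matrix Finset

theorem Matrix.spectrum_transpose {R n : Type*} [CommRing R] [Fintype n] [DecidableEq n]
    (A : Matrix n n R) : spectrum R Aᵀ = spectrum R A := by
  ext μ
  rw [spectrum.mem_iff, spectrum.mem_iff, ← isUnit_transpose, transpose_sub,
    algebraMap_eq_diagonal, diagonal_transpose, transpose_transpose]

theorem Matrix.exists_mem_closedBall_col_of_mem_spectrum {K n : Type*} [NormedField K]
    [Fintype n] [DecidableEq n] {A : Matrix n n K} {μ : K} (hμ : μ ∈ spectrum K A) :
    ∃ k, μ ∈ Metric.closedBall (A k k) (∑ j ∈ univ.erase k, ‖A j k‖) := by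
  rw [← spectrum_transpose, ← spectrum_toLin', ← Module.End.hasEigenvalue_iff_mem_spectrum] at hμ
  exact eigenvalue_mem_ball hμ

theorem Matrix.exists_norm_sub_le_of_mem_spectrum_one_sub_mul_diagonal {K n : Type*}
    [NormedField K] [Fintype n] [DecidableEq n] {W : Matrix n n K} {d : n → K} {μ : K}
    (hμ : μ ∈ spectrum K (1 - W * diagonal d)) :
    ∃ k, ‖μ - (1 - W k k * d k)‖ ≤ ‖d k‖ * ∑ j ∈ univ.erase k, ‖W j k‖ := by
  obtain ⟨k, hk⟩ := exists_mem_closedBall_col_of_mem_spectrum hμ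
  have hdiag : (1 - W * diagonal d) k k = 1 - W k k * d k := by simp [mul_diagonal]
  have hoff : ∀ j ∈ univ.erase k, ‖(1 - W * diagonal d) j k‖ = ‖d k‖ * ‖W j k‖ := fun j hj => by
    simp [mul_diagonal, one_apply_ne (ne_of_mem_erase hj), mul_comm]
  rw [mem_closedBall_iff_norm, hdiag, sum_congr rfl hoff, ← mul_sum] at hk
  exact ⟨k, hk⟩

theorem Complex.norm_one_sub_mul_add_mul_lt_one {w : ℂ} {ρ r : ℝ} (hrw : r < w.re)
    (hρ : 0 < ρ) (hρlt : ρ < 2 * (w.re - r) / (‖w‖ ^ 2 - r ^ 2)) (hρr : ρ * r < 1) :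
    ‖1 - w * ρ‖ + ρ * r < 1 := by
  have hden : 0 < ‖w‖ ^ 2 - r ^ 2 := by
    rcases div_pos_iff.mp (hρ.trans hρlt) with h | h
    · exact h.2
    · linarith [h.1]
  have hkey : ρ * (‖w‖ ^ 2 - r ^ 2) < 2 * (w.re - r) := (lt_div_iff₀ hden).mp hρlt
  have hsq : ‖1 - w * ρ‖ ^ 2 = 1 - 2 * ρ * w.re + ρ ^ 2 * ‖w‖ ^ 2 := by
    rw [← normSq_eq_norm_sq, ← normSq_eq_norm_sq, normSq_apply, normSq_apply]
    simp only [sub_re, one_re, mul_re, ofReal_re, ofReal_im, mul_zero, sub_zero, sub_im, one_im,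
      mul_im, zero_add, zero_sub, mul_neg, neg_mul, neg_neg]
    ring
  have hpos : 0 < 1 - ρ * r := by linarith
  suffices ‖1 - w * ρ‖ ^ 2 < (1 - ρ * r) ^ 2 by
    linarith [(pow_lt_pow_iff_left₀ (norm_nonneg _) hpos.le two_ne_zero).mp this]
  nlinarith

theorem ilc_convergence_conditions (m : ℕ)
    (Δ : Matrix (Fin m) (Fin m) ℂ) (ρ : Fin m → ℝ)
    (A : Fin m → Fin m → ℝ) (M : Fin m → Fin m → ℝ) (R : Fin m → ℝ)
    (hA : ∀ j l, A j l = (Δ j l).re)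
    (hM : ∀ j l, M j l = ‖Δ j l‖)
    (hR : ∀ i, R i = ∑ j ∈ univ \ {i}, M j i)
    (ha : ∀ i, R i < 1 + A i i)
    (hb : ∀ i, 0 < ρ i ∧
      ρ i < 2 * (1 + A i i - R i) / (1 + 2 * A i i + (M i i) ^ 2 - (R i) ^ 2))
    (hc : ∀ i, ρ i * R i < 1) :
    ∀ μ ∈ spectrum ℂ
        ((1 - Matrix.diagonal (fun i => (ρ i : ℂ))) -
          Δ * Matrix.diagonal (fun i => (ρ i : ℂ))),
      ‖μ‖ < 1 := by
  intro μ hμ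
  rw [sub_sub, ← one_add_mul] at hμ
  obtain ⟨k, hk⟩ := exists_norm_sub_le_of_mem_spectrum_one_sub_mul_diagonal hμ
  set w := (1 + Δ) k k
  have hre : w.re = 1 + A k k := by simp [w, hA]
  have hnorm : ‖w‖ ^ 2 = 1 + 2 * A k k + M k k ^ 2 := by
    rw [← Complex.normSq_eq_norm_sq, hA, hM, ← Complex.normSq_eq_norm_sq]
    simp only [w, Matrix.add_apply, one_apply_eq, Complex.normSq_apply, Complex.add_re,
      Complex.one_re, Complex.add_im, Complex.one_im, zero_add]
    ring
  have hradius : ‖(ρ k : ℂ)‖ * ∑ j ∈ univ.erase k, ‖(1 + Δ) j k‖ = ρ k * R k := by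
    rw [Complex.norm_of_nonneg (hb k).1.le, hR, sdiff_singleton_eq_erase]
    congr 1
    exact sum_congr rfl fun j hj => by simp [hM, one_apply_ne (ne_of_mem_erase hj)]
  have hlt := Complex.norm_one_sub_mul_add_mul_lt_one (w := w) (r := R k) (hre ▸ ha k)
    (hb k).1 (by rw [hre, hnorm]; exact (hb k).2) (hc k)
  calc ‖μ‖ ≤ ‖μ - (1 - w * ρ k)‖ + ‖1 - w * ρ k‖ := norm_le_norm_sub_add _ _
    _ < 1 := by linarith
end

section
/- Let $\rho > 0$ and $\Delta \in \mathbb{C}$ with $\Delta = A + iB$, $M = |\Delta|$, and let $R \ge 0$ satisfy $R < 1 + A$ and $\rho R < 1$ and $0 < \rho < 2(1 + A - R)/(1 + 2A + M^2 - R^2)$. Then $|1 - \rho - \rho\Delta| < 1 - \rho R$. -/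
/-! With `w = 1 + Δ` we have `Re w = 1 + A` and `‖w‖² = 1 + 2A + M²`, and the squared gap
`(1 - ρR)² - ‖1 - ρw‖²` factors as `ρ (2 (Re w - R) - ρ (‖w‖² - R²))`, which is positive
exactly under the bound on `ρ`. -/

open Complex

lemma Complex.sq_norm_one_add (z : ℂ) : ‖1 + z‖ ^ 2 = 1 + 2 * z.re + ‖z‖ ^ 2 := by
  rw [Complex.sq_norm, Complex.sq_norm, normSq_add]
  simp only [map_one, one_mul, conj_re]
  ring

lemma Complex.sq_norm_one_sub_ofReal_mul (ρ : ℝ) (w : ℂ) :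
    ‖1 - (ρ : ℂ) * w‖ ^ 2 = 1 - 2 * ρ * w.re + ρ ^ 2 * ‖w‖ ^ 2 := by
  rw [Complex.sq_norm, Complex.sq_norm, normSq_apply, normSq_apply]
  simp only [sub_re, sub_im, one_re, one_im, re_ofReal_mul, im_ofReal_mul]
  ring

lemma Complex.norm_one_sub_ofReal_mul_lt {ρ R : ℝ} {w : ℂ} (hρ : 0 < ρ) (hR : R < w.re)
    (hρR : ρ * R < 1) (hρub : ρ < 2 * (w.re - R) / (‖w‖ ^ 2 - R ^ 2)) :
    ‖1 - (ρ : ℂ) * w‖ < 1 - ρ * R := by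
  have hden : 0 < ‖w‖ ^ 2 - R ^ 2 :=
    (div_pos_iff_of_pos_left (by linarith)).mp (hρ.trans hρub)
  have hgap : 0 < ρ * (2 * (w.re - R) - ρ * (‖w‖ ^ 2 - R ^ 2)) :=
    mul_pos hρ (sub_pos.mpr ((lt_div_iff₀ hden).mp hρub))
  have hsq : ‖1 - (ρ : ℂ) * w‖ ^ 2 < (1 - ρ * R) ^ 2 := calc
    ‖1 - (ρ : ℂ) * w‖ ^ 2 = 1 - 2 * ρ * w.re + ρ ^ 2 * ‖w‖ ^ 2 :=
      sq_norm_one_sub_ofReal_mul ρ w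
    _ = (1 - ρ * R) ^ 2 - ρ * (2 * (w.re - R) - ρ * (‖w‖ ^ 2 - R ^ 2)) := by ring
    _ < (1 - ρ * R) ^ 2 := by linarith
  exact lt_of_pow_lt_pow_left₀ 2 (by linarith) hsq

theorem ilc_scalar_contraction_general (ρ : ℝ) (Δ : ℂ) (A M R : ℝ)
    (hA : A = Δ.re) (hM : M = ‖Δ‖)
    (hρ : 0 < ρ) (hR1 : R < 1 + A) (hρR : ρ * R < 1)
    (hρub : ρ < 2 * (1 + A - R) / (1 + 2 * A + M ^ 2 - R ^ 2)) :
    ‖1 - (ρ : ℂ) - (ρ : ℂ) * Δ‖ < 1 - ρ * R := by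
  have hre : (1 + Δ).re = 1 + A := by simp [hA]
  have hnorm : ‖1 + Δ‖ ^ 2 = 1 + 2 * A + M ^ 2 := by rw [sq_norm_one_add, hA, hM]
  rw [show (1 : ℂ) - ρ - ρ * Δ = 1 - ρ * (1 + Δ) by ring]
  exact norm_one_sub_ofReal_mul_lt hρ (hre ▸ hR1) hρR (by rwa [hre, hnorm])

theorem ilc_scalar_contraction (ρ : ℝ) (Δ : ℂ) (A B M R : ℝ)
    (hA : A = Δ.re) (hB : B = Δ.im) (hM : M = ‖Δ‖)
    (hρ : 0 < ρ) (hR0 : 0 ≤ R) (hR1 : R < 1 + A) (hρR : ρ * R < 1)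
    (hρub : ρ < 2 * (1 + A - R) / (1 + 2 * A + M ^ 2 - R ^ 2)) :
    ‖1 - (ρ : ℂ) - (ρ : ℂ) * Δ‖ < 1 - ρ * R :=
  ilc_scalar_contraction_general ρ Δ A M R hA hM hρ hR1 hρR hρub
end

section
/- Let $\Delta \in \mathbb{C}^{m\times m}$ with $|\Delta_{j,l}| < \overline{\Delta}_{j,l}$ for all $j,l$, where $\overline{\Delta}_{j,l} > 0$. Let $\rho = \mathrm{diag}(\rho_1,\dots,\rho_m)$ and set $\overline{\Delta}_{R,i} = \sum_{j\ne i} \overline{\Delta}_{j,i}$. Suppose for every $i$: (a) $\overline{\Delta}_{R,i} < 1 - \overline{\Delta}_{i,i}$, (b) $\rho_i \overline{\Delta}_{R,i} < 1$, and (c) $0 < \rho_i < \min_{p=\pm 1} \dfrac{2(1 + p\overline{\Delta}_{i,i} - \overline{\Delta}_{R,i})}{1 + 2p\overline{\Delta}_{i,i} + \overline{\Delta}_{i,i}^2 - \overline{\Delta}_{R,i}^2}$. Then the spectral radius of $G = (I - \rho) - \Delta\rho$ is strictly less than 1. -/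
/-!
Write `G = diag(1 - ρ) - Δ ρ`. Gershgorin's theorem for the columns of `G` puts every eigenvalue
in a disc around `1 - ρᵢ - Δᵢᵢ ρᵢ` of radius `ρᵢ ∑_{j ≠ i} |Δⱼᵢ|`, so
`|μ| ≤ |1 - ρᵢ| + ρᵢ a` with `a = Δ̄ᵢᵢ + Δ̄_{R,i} < 1` by (a). This is `< 1` when `ρᵢ ≤ 1`;
when `ρᵢ > 1` it amounts to `ρᵢ (1 + a) < 2`, which is condition (c) for `p = 1` once its
denominator is factored as `(1 + Δ̄ᵢᵢ - Δ̄_{R,i}) (1 + a)`.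
-/

open Matrix Finset

section Gershgorin

variable {K n : Type*} [NormedField K] [Fintype n] [DecidableEq n]

theorem exists_norm_sub_diag_le_sum_col_of_mem_spectrum {A : Matrix n n K} {μ : K}
    (hμ : μ ∈ spectrum K A) : ∃ k, ‖μ - A k k‖ ≤ ∑ j ∈ univ.erase k, ‖A j k‖ := by
  rw [← Matrix.spectrum_transpose, ← Matrix.spectrum_toLin'] at hμ
  obtain ⟨k, hk⟩ := eigenvalue_mem_ball (Module.End.HasEigenvalue.of_mem_spectrum hμ)
  exact ⟨k, mem_closedBall_iff_norm.mp hk⟩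

theorem exists_norm_le_of_mem_spectrum_diagonal_add {d : n → K} {B : Matrix n n K} {μ : K}
    (hμ : μ ∈ spectrum K (diagonal d + B)) : ∃ k, ‖μ‖ ≤ ‖d k‖ + ∑ j, ‖B j k‖ := by
  obtain ⟨k, hk⟩ := exists_norm_sub_diag_le_sum_col_of_mem_spectrum hμ
  have hoff : ∑ j ∈ univ.erase k, ‖(diagonal d + B) j k‖ = ∑ j ∈ univ.erase k, ‖B j k‖ :=
    sum_congr rfl fun j hj => by simp [diagonal_apply_ne _ (ne_of_mem_erase hj)]
  rw [hoff, Matrix.add_apply, diagonal_apply_eq] at hk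
  refine ⟨k, ?_⟩
  calc ‖μ‖ ≤ ‖μ - (d k + B k k)‖ + ‖d k + B k k‖ := norm_le_norm_sub_add _ _
    _ ≤ ∑ j ∈ univ.erase k, ‖B j k‖ + (‖d k‖ + ‖B k k‖) := add_le_add hk (norm_add_le _ _)
    _ = ‖d k‖ + ∑ j, ‖B j k‖ := by rw [← add_sum_erase _ _ (mem_univ k)]; ring

end Gershgorin

section IlcGain

variable {n : Type*} [Fintype n] [DecidableEq n]

def ilcGain (Δ : Matrix n n ℂ) (ρ : n → ℝ) : Matrix n n ℂ :=
  (1 - diagonal (fun i => (ρ i : ℂ))) - Δ * diagonal (fun i => (ρ i : ℂ))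

theorem ilcGain_eq_diagonal_add (Δ : Matrix n n ℂ) (ρ : n → ℝ) :
    ilcGain Δ ρ =
      diagonal (fun i => ((1 - ρ i : ℝ) : ℂ)) + -(Δ * diagonal (fun i => (ρ i : ℂ))) := by
  rw [ilcGain, ← diagonal_one, diagonal_sub]
  push_cast
  abel

theorem exists_norm_le_of_mem_spectrum_ilcGain {Δ : Matrix n n ℂ} {ρ : n → ℝ}
    (hρ : ∀ i, 0 ≤ ρ i) {μ : ℂ} (hμ : μ ∈ spectrum ℂ (ilcGain Δ ρ)) :
    ∃ i, ‖μ‖ ≤ |1 - ρ i| + ρ i * ∑ j, ‖Δ j i‖ := by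
  rw [ilcGain_eq_diagonal_add] at hμ
  obtain ⟨i, hi⟩ := exists_norm_le_of_mem_spectrum_diagonal_add hμ
  refine ⟨i, hi.trans_eq ?_⟩
  rw [Complex.norm_real, Real.norm_eq_abs, mul_sum]
  simp [mul_diagonal, abs_of_nonneg (hρ i), mul_comm]

end IlcGain

theorem abs_one_sub_add_mul_lt_one {r a : ℝ} (hr : 0 < r) (ha : a < 1) (h : r * (1 + a) < 2) :
    |1 - r| + r * a < 1 := by
  rcases le_total r 1 with h1 | h1
  · rw [abs_of_nonneg (sub_nonneg.mpr h1)]; nlinarith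
  · rw [abs_of_nonpos (sub_nonpos.mpr h1)]; linarith

theorem mul_one_add_add_lt_two {r d s : ℝ} (hsub : 0 < 1 + d - s) (hadd : 0 < 1 + d + s)
    (h : r < 2 * (1 + d - s) / (1 + 2 * d + d ^ 2 - s ^ 2)) : r * (1 + (d + s)) < 2 := by
  rw [show 1 + 2 * d + d ^ 2 - s ^ 2 = (1 + d - s) * (1 + d + s) by ring,
    mul_comm 2 (1 + d - s), mul_div_mul_left _ _ hsub.ne', lt_div_iff₀ hadd] at h
  linarith

theorem ilc_bounded_uncertainty_convergence_general (m : ℕ)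
    (Δ : Matrix (Fin m) (Fin m) ℂ) (Δb : Fin m → Fin m → ℝ)
    (hΔ : ∀ j l, ‖Δ j l‖ < Δb j l)
    (ρ : Fin m → ℝ) (ΔR : Fin m → ℝ)
    (hΔR : ∀ i, ΔR i = ∑ j ∈ univ \ {i}, Δb j i)
    (ha : ∀ i, ΔR i < 1 - Δb i i)
    (hc : ∀ i, 0 < ρ i ∧
      ρ i < min
        (2 * (1 + Δb i i - ΔR i) / (1 + 2 * Δb i i + (Δb i i) ^ 2 - (ΔR i) ^ 2))
        (2 * (1 + (-1 : ℝ) * Δb i i - ΔR i) /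
          (1 + 2 * (-1 : ℝ) * Δb i i + (Δb i i) ^ 2 - (ΔR i) ^ 2))) :
    ∀ μ ∈ spectrum ℂ
        ((1 - Matrix.diagonal (fun i => (ρ i : ℂ))) -
          Δ * Matrix.diagonal (fun i => (ρ i : ℂ))),
      ‖μ‖ < 1 := by
  intro μ hμ
  obtain ⟨i, hi⟩ := exists_norm_le_of_mem_spectrum_ilcGain (Δ := Δ) (fun i => (hc i).1.le) hμ
  have hcol : ∑ j, ‖Δ j i‖ ≤ Δb i i + ΔR i := by
    rw [hΔR, sdiff_singleton_eq_erase, add_sum_erase univ (fun j => Δb j i) (mem_univ i)]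
    exact sum_le_sum fun j _ => (hΔ j i).le
  have hdiag : 0 ≤ Δb i i := (norm_nonneg _).trans (hΔ i i).le
  have hcol_nonneg : 0 ≤ Δb i i + ΔR i := (sum_nonneg fun j _ => norm_nonneg _).trans hcol
  have hρ : ρ i * (1 + (Δb i i + ΔR i)) < 2 :=
    mul_one_add_add_lt_two (by linarith [ha i]) (by linarith)
      ((hc i).2.trans_le (min_le_left _ _))
  calc ‖μ‖ ≤ |1 - ρ i| + ρ i * ∑ j, ‖Δ j i‖ := hi
    _ ≤ |1 - ρ i| + ρ i * (Δb i i + ΔR i) := by gcongr; exact (hc i).1.le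
    _ < 1 := abs_one_sub_add_mul_lt_one (hc i).1 (by linarith [ha i]) hρ

theorem ilc_bounded_uncertainty_convergence (m : ℕ)
    (Δ : Matrix (Fin m) (Fin m) ℂ) (Δb : Fin m → Fin m → ℝ)
    (hΔb : ∀ j l, 0 < Δb j l)
    (hΔ : ∀ j l, ‖Δ j l‖ < Δb j l)
    (ρ : Fin m → ℝ) (ΔR : Fin m → ℝ)
    (hΔR : ∀ i, ΔR i = ∑ j ∈ univ \ {i}, Δb j i)
    (ha : ∀ i, ΔR i < 1 - Δb i i)
    (hb : ∀ i, ρ i * ΔR i < 1)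
    (hc : ∀ i, 0 < ρ i ∧
      ρ i < min
        (2 * (1 + Δb i i - ΔR i) / (1 + 2 * Δb i i + (Δb i i) ^ 2 - (ΔR i) ^ 2))
        (2 * (1 + (-1 : ℝ) * Δb i i - ΔR i) /
          (1 + 2 * (-1 : ℝ) * Δb i i + (Δb i i) ^ 2 - (ΔR i) ^ 2))) :
    ∀ μ ∈ spectrum ℂ
        ((1 - Matrix.diagonal (fun i => (ρ i : ℂ))) -
          Δ * Matrix.diagonal (fun i => (ρ i : ℂ))),
      ‖μ‖ < 1 :=
  ilc_bounded_uncertainty_convergence_general m Δ Δb hΔ ρ ΔR hΔR ha hc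
end
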